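/- arXiv:2310.01070 — 2 statements merged into one kernel-verified Lean document; each statement's English description precedes it below -/
import Mathlib

section
/- Fix n ≥ 1, s ∈ (0,1), y > 0 and x ∈ ℝⁿ. Then ∫₀^∞ (1/(t·Γ(s))) · (y²/(2t))^s · e^{-y²/(2t)} · (2πt)^{-n/2} · e^{-|x|²/(2t)} dt = (Γ(s + n/2)/(π^{n/2} Γ(s))) · y^{2s}/(|x|² + y²)^{n/2 + s}. That is, integrating the n-dimensional Gaussian heat kernel of variance t against the hitting-time density (1/(t·Γ(s)))(y²/(2t))^s e^{-y²/(2t)} yields the Poisson-type kernel. -/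
/-!
After the substitution `u = 2t` the two exponentials merge and the integrand becomes a constant
multiple of the inverse-gamma density `u ^ (-a - 1) * exp (-b / u)` with `a = s + n / 2` and
`b = |x|² + y²`, whose integral `Γ(a) / b ^ a` follows from Euler's integral by `u ↦ u⁻¹`.
-/

open MeasureTheory Real Set

theorem integral_rpow_neg_sub_one_mul_exp_neg_div_Ioi {a b : ℝ} (ha : 0 < a) (hb : 0 < b) :
    ∫ t in Ioi (0 : ℝ), t ^ (-a - 1) * exp (-(b / t)) = Gamma a / b ^ a := by
  have h := integral_comp_rpow_Ioi (fun u => u ^ (a - 1) * exp (-(b * u))) (p := -1) (by norm_num)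
  rw [integral_rpow_mul_exp_neg_mul_Ioi ha hb, one_div, inv_rpow hb.le] at h
  rw [div_eq_mul_inv, mul_comm, ← h]
  refine setIntegral_congr_fun measurableSet_Ioi fun t (ht : 0 < t) => ?_
  rw [smul_eq_mul, rpow_neg_one, inv_rpow ht.le, ← rpow_neg ht.le, abs_neg, abs_one, one_mul,
    ← div_eq_mul_inv, ← mul_assoc, ← rpow_add ht]
  ring_nf

theorem hitting_density_mul_heat_kernel_eq {d s y r t : ℝ} (ht : 0 < t) :
    (1 / (t * Gamma s)) * (y ^ 2 / (2 * t)) ^ s * exp (-(y ^ 2 / (2 * t)))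
        * (2 * π * t) ^ (-d / 2) * exp (-(r ^ 2 / (2 * t)))
      = (y ^ 2) ^ s / (π ^ (d / 2) * Gamma s)
        * (2 * ((2 * t) ^ (-(s + d / 2) - 1) * exp (-((r ^ 2 + y ^ 2) / (2 * t))))) := by
  have hu : 0 < 2 * t := by positivity
  have hpow : (2 * t) ^ (-(s + d / 2) - 1) = (2 * t * (2 * t) ^ s * (2 * t) ^ (d / 2))⁻¹ := by
    rw [rpow_sub hu, rpow_neg hu.le, rpow_add hu, rpow_one, div_eq_mul_inv, ← mul_inv, mul_comm,
      ← mul_assoc]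
  rw [div_rpow (sq_nonneg y) hu.le, show 2 * π * t = π * (2 * t) by ring, neg_div,
    rpow_neg (by positivity), mul_rpow pi_nonneg hu.le, hpow, add_div, neg_add, exp_add]
  field_simp

theorem integral_hitting_density_mul_heat_kernel {d s y r : ℝ} (hy : 0 < y)
    (hsd : 0 < s + d / 2) :
    ∫ t in Ioi (0 : ℝ),
        (1 / (t * Gamma s)) * (y ^ 2 / (2 * t)) ^ s * exp (-(y ^ 2 / (2 * t)))
          * (2 * π * t) ^ (-d / 2) * exp (-(r ^ 2 / (2 * t)))
      = Gamma (s + d / 2) / (π ^ (d / 2) * Gamma s) * y ^ (2 * s)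
          / (r ^ 2 + y ^ 2) ^ (d / 2 + s) := by
  have hb : 0 < r ^ 2 + y ^ 2 := by positivity
  have hscale := integral_comp_mul_left_Ioi' (fun u => u ^ (-(s + d / 2) - 1) *
    exp (-((r ^ 2 + y ^ 2) / u))) 0 two_pos
  rw [smul_eq_mul, mul_zero, integral_rpow_neg_sub_one_mul_exp_neg_div_Ioi hsd hb] at hscale
  rw [setIntegral_congr_fun measurableSet_Ioi fun t (ht : 0 < t) =>
      hitting_density_mul_heat_kernel_eq (d := d) (r := r) ht, integral_const_mul,
    integral_const_mul, hscale, ← rpow_natCast, ← rpow_mul hy.le, add_comm (d / 2)]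
  push_cast
  ring

theorem subordination_of_heat_kernel_eq_poisson_kernel_general
    (n : ℕ) (s : ℝ) (hs : s ∈ Set.Ioo (0 : ℝ) 1)
    (y : ℝ) (hy : 0 < y) (x : EuclideanSpace ℝ (Fin n)) :
    ∫ t in Set.Ioi (0 : ℝ),
        (1 / (t * Real.Gamma s)) * (y ^ 2 / (2 * t)) ^ s * Real.exp (-(y ^ 2 / (2 * t)))
          * (2 * Real.pi * t) ^ (-(n : ℝ) / 2) * Real.exp (-(‖x‖ ^ 2 / (2 * t)))
      = (Real.Gamma (s + n / 2) / (Real.pi ^ ((n : ℝ) / 2) * Real.Gamma s))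
          * y ^ (2 * s) / (‖x‖ ^ 2 + y ^ 2) ^ ((n : ℝ) / 2 + s) :=
  integral_hitting_density_mul_heat_kernel hy (by positivity [hs.1])

/-- Integrating the `n`-dimensional Gaussian heat kernel of variance `t`
against the hitting-time density `(1/(t·Γ(s)))(y²/(2t))^s e^{-y²/(2t)}` yields the
Poisson-type kernel. -/
theorem subordination_of_heat_kernel_eq_poisson_kernel
    (n : ℕ) (hn : 1 ≤ n) (s : ℝ) (hs : s ∈ Set.Ioo (0 : ℝ) 1)
    (y : ℝ) (hy : 0 < y) (x : EuclideanSpace ℝ (Fin n)) :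
    ∫ t in Set.Ioi (0 : ℝ),
        (1 / (t * Real.Gamma s)) * (y ^ 2 / (2 * t)) ^ s * Real.exp (-(y ^ 2 / (2 * t)))
          * (2 * Real.pi * t) ^ (-(n : ℝ) / 2) * Real.exp (-(‖x‖ ^ 2 / (2 * t)))
      = (Real.Gamma (s + n / 2) / (Real.pi ^ ((n : ℝ) / 2) * Real.Gamma s))
          * y ^ (2 * s) / (‖x‖ ^ 2 + y ^ 2) ^ ((n : ℝ) / 2 + s) :=
  subordination_of_heat_kernel_eq_poisson_kernel_general n s hs y hy x
end

section
/- Fix n ≥ 1, s ∈ (0,1) and y > 0. Then ∫_{ℝⁿ} K_y(x) dx = 1, i.e. the Poisson-type kernel K_y is a probability density on ℝⁿ. -/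
/-!
Subordinate the kernel to Gaussians: with `a = n/2 + s`, the Gamma integral gives
`(‖x‖² + y²) ^ (-a) = Γ(a)⁻¹ ∫₀^∞ t ^ (a - 1) e^{-(‖x‖² + y²) t} dt`. Integrating in `x` first
(Tonelli), the Gaussian integral contributes `(π / t) ^ (n/2)`, which leaves
`π ^ (n/2) ∫₀^∞ t ^ (s - 1) e^{-y² t} dt = π ^ (n/2) Γ(s) y ^ (-2s)`; this is exactly the
reciprocal of `C_{n,s} y ^ (2s)`.
-/

open MeasureTheory Real Set Module

/-- The Poisson-type kernel `K_y(x) = C_{n,s} · y^{2s} / (|x|² + y²)^{n/2+s}`, where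
`C_{n,s} = Γ(s + n/2) / (π^{n/2} Γ(s))`. -/
noncomputable def poissonKernel' (n : ℕ) (s : ℝ) (y : ℝ) (x : EuclideanSpace ℝ (Fin n)) : ℝ :=
  (Real.Gamma (s + n / 2) / (Real.pi ^ ((n : ℝ) / 2) * Real.Gamma s))
    * y ^ (2 * s) / (‖x‖ ^ 2 + y ^ 2) ^ ((n : ℝ) / 2 + s)

theorem lintegral_rpow_mul_exp_neg_mul_Ioi {a r : ℝ} (ha : 0 < a) (hr : 0 < r) :
    ∫⁻ t in Ioi 0, ENNReal.ofReal (t ^ (a - 1) * rexp (-(r * t))) =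
      ENNReal.ofReal (r ^ (-a) * Gamma a) := by
  have hint := integral_rpow_mul_exp_neg_mul_Ioi ha hr
  rw [one_div, inv_rpow hr.le, ← rpow_neg hr.le] at hint
  rw [← hint, ofReal_integral_eq_lintegral_ofReal]
  · exact Integrable.of_integral_ne_zero (by rw [hint]; positivity)
  · filter_upwards [ae_restrict_mem measurableSet_Ioi] with t (ht : 0 < t)
    positivity

section InnerProductSpace

variable {V : Type*} [NormedAddCommGroup V] [InnerProductSpace ℝ V] [FiniteDimensional ℝ V]
  [MeasurableSpace V] [BorelSpace V]

theorem lintegral_exp_neg_mul_sq_norm {t : ℝ} (ht : 0 < t) :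
    ∫⁻ x : V, ENNReal.ofReal (rexp (-t * ‖x‖ ^ 2)) =
      ENNReal.ofReal ((π / t) ^ (finrank ℝ V / 2 : ℝ)) := by
  have hint := GaussianFourier.integral_rexp_neg_mul_sq_norm (V := V) ht
  rw [← hint, ofReal_integral_eq_lintegral_ofReal]
  · exact Integrable.of_integral_ne_zero (by rw [hint]; positivity)
  · exact Filter.Eventually.of_forall fun _ => (exp_pos _).le

theorem gamma_mul_lintegral_rpow_neg_sq_norm_add {s c : ℝ} (hs : 0 < s) (hc : 0 < c) :
    ENNReal.ofReal (Gamma (finrank ℝ V / 2 + s)) *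
        ∫⁻ x : V, ENNReal.ofReal ((‖x‖ ^ 2 + c) ^ (-(finrank ℝ V / 2 + s))) =
      ENNReal.ofReal (π ^ (finrank ℝ V / 2 : ℝ) * (c ^ (-s) * Gamma s)) := by
  set d : ℝ := (finrank ℝ V : ℝ) with hd
  set a := d / 2 + s
  have ha : 0 < a := by positivity
  set F : V → ℝ → ENNReal := fun x t =>
    ENNReal.ofReal (t ^ (a - 1) * rexp (-((‖x‖ ^ 2 + c) * t)))
  have integral_t (x : V) : ∫⁻ t in Ioi 0, F x t =
      ENNReal.ofReal (Gamma a) * ENNReal.ofReal ((‖x‖ ^ 2 + c) ^ (-a)) := by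
    rw [lintegral_rpow_mul_exp_neg_mul_Ioi ha (by positivity), mul_comm,
      ENNReal.ofReal_mul (by positivity)]
  have integral_x (t : ℝ) (ht : t ∈ Ioi 0) : ∫⁻ x : V, F x t =
      ENNReal.ofReal (π ^ (d / 2)) * ENNReal.ofReal (t ^ (s - 1) * rexp (-(c * t))) := by
    have ht : 0 < t := ht
    have hsplit (x : V) : F x t = ENNReal.ofReal (t ^ (a - 1) * rexp (-(c * t))) *
        ENNReal.ofReal (rexp (-t * ‖x‖ ^ 2)) := by
      rw [← ENNReal.ofReal_mul (by positivity), mul_assoc, ← exp_add]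
      simp only [F]
      ring_nf
    have hpow : t ^ (a - 1) = t ^ (d / 2) * t ^ (s - 1) := by
      rw [← rpow_add ht]
      simp only [a]
      ring_nf
    simp_rw [hsplit]
    rw [lintegral_const_mul _ (by fun_prop), lintegral_exp_neg_mul_sq_norm ht, ← hd,
      ← ENNReal.ofReal_mul (by positivity), ← ENNReal.ofReal_mul (by positivity), hpow,
      div_rpow pi_pos.le ht.le]
    congr 1
    field_simp
  calc ENNReal.ofReal (Gamma a) * ∫⁻ x : V, ENNReal.ofReal ((‖x‖ ^ 2 + c) ^ (-a))
      = ∫⁻ x : V, ∫⁻ t in Ioi 0, F x t := by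
        simp_rw [integral_t]; rw [lintegral_const_mul' _ _ ENNReal.ofReal_ne_top]
    _ = ∫⁻ t in Ioi 0, ∫⁻ x : V, F x t := lintegral_lintegral_swap (by fun_prop)
    _ = ∫⁻ t in Ioi 0, ENNReal.ofReal (π ^ (d / 2)) *
          ENNReal.ofReal (t ^ (s - 1) * rexp (-(c * t))) :=
        setLIntegral_congr_fun measurableSet_Ioi integral_x
    _ = ENNReal.ofReal (π ^ (d / 2) * (c ^ (-s) * Gamma s)) := by
        rw [lintegral_const_mul _ (by fun_prop), lintegral_rpow_mul_exp_neg_mul_Ioi hs hc]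
        exact (ENNReal.ofReal_mul (by positivity)).symm

theorem integral_rpow_neg_sq_norm_add {s c : ℝ} (hs : 0 < s) (hc : 0 < c) :
    ∫ x : V, (‖x‖ ^ 2 + c) ^ (-(finrank ℝ V / 2 + s)) =
      π ^ (finrank ℝ V / 2 : ℝ) * (c ^ (-s) * Gamma s) / Gamma (finrank ℝ V / 2 + s) := by
  have hΓ : 0 < Gamma (finrank ℝ V / 2 + s) := Gamma_pos_of_pos (by positivity)
  have h := congrArg ENNReal.toReal (gamma_mul_lintegral_rpow_neg_sq_norm_add (V := V) hs hc)
  rw [ENNReal.toReal_mul, ENNReal.toReal_ofReal hΓ.le, ENNReal.toReal_ofReal (by positivity),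
    ← integral_eq_lintegral_of_nonneg_ae (Filter.Eventually.of_forall fun x => by positivity)
      (Continuous.rpow_const (by fun_prop) fun x => Or.inl (by positivity)).aestronglyMeasurable]
    at h
  rw [← h]
  field_simp

end InnerProductSpace

theorem poissonKernel'_eq (n : ℕ) (s y : ℝ) (x : EuclideanSpace ℝ (Fin n)) :
    poissonKernel' n s y x = Gamma (n / 2 + s) / (π ^ ((n : ℝ) / 2) * Gamma s) * y ^ (2 * s) *
      (‖x‖ ^ 2 + y ^ 2) ^ (-((n : ℝ) / 2 + s)) := by
  rw [poissonKernel', rpow_neg (by positivity), add_comm s, div_eq_mul_inv]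

theorem integral_poissonKernel_eq_one_general
    (n : ℕ) (s : ℝ) (hs : s ∈ Set.Ioo (0 : ℝ) 1) (y : ℝ) (hy : 0 < y) :
    ∫ x : EuclideanSpace ℝ (Fin n), poissonKernel' n s y x = 1 := by
  have hy2 : y ^ (2 * s) * (y ^ 2) ^ (-s) = 1 := by
    rw [rpow_mul hy.le, rpow_two, ← rpow_add (by positivity), add_neg_cancel, rpow_zero]
  have key := integral_rpow_neg_sq_norm_add (V := EuclideanSpace ℝ (Fin n)) hs.1
    (by positivity : 0 < y ^ 2)
  rw [finrank_euclideanSpace_fin] at key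
  simp_rw [poissonKernel'_eq]
  rw [integral_const_mul, key]
  have hΓs := Gamma_pos_of_pos hs.1
  have hΓa : 0 < Gamma ((n : ℝ) / 2 + s) :=
    Gamma_pos_of_pos (by linarith [hs.1, n.cast_nonneg (α := ℝ)])
  set Γa := Gamma ((n : ℝ) / 2 + s)
  field_simp
  linear_combination hy2

/-- For `n ≥ 1`, `s ∈ (0,1)` and `y > 0`, the Poisson-type kernel `K_y`
is a probability density on `ℝⁿ`: `∫_{ℝⁿ} K_y(x) dx = 1`. -/
theorem integral_poissonKernel_eq_one
    (n : ℕ) (hn : 1 ≤ n) (s : ℝ) (hs : s ∈ Set.Ioo (0 : ℝ) 1) (y : ℝ) (hy : 0 < y) :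
    ∫ x : EuclideanSpace ℝ (Fin n), poissonKernel' n s y x = 1 :=
  integral_poissonKernel_eq_one_general n s hs y hy
end
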